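/- arXiv:2005.02039 — 3 statements merged into one kernel-verified Lean document; each statement's English description precedes it below -/
import Mathlib

section
/- Let O : ℝ^{n_p} → ℝ^{n_y} and M : ℝ^{n_u} × ℝ^{n_p} → ℝ^{n_w} be continuous maps, let R₁ : ℝ^{n_u} → ℝ and R₂ : ℝ^{n_p} → ℝ be continuous, let α₁, α₂ > 0, let Γ_obs ∈ ℝ^{n_y×n_y} and Γ̂ ∈ ℝ^{n_w×n_w} be symmetric positive definite, let y ∈ ℝ^{n_y}, and assume the feasible set {(u,p) : M(u,p) = 0} is nonempty. Let (λ_k)_{k∈ℕ} ⊂ ℝ₊ be strictly monotonically increasing with λ_k → ∞, and for each k let (u_k, p_k) be a global minimizer of (u,p) ↦ ½‖O(p) − y‖²_{Γ_obs} + (λ_k/2)‖M(u,p)‖²_{Γ̂} + α₁R₁(u) + α₂R₂(p). Then every accumulation point of the sequence (u_k, p_k) is a global minimizer of ½‖O(p) − y‖²_{Γ_obs} + α₁R₁(u) + α₂R₂(p) subject to the constraint M(u,p) = 0. -/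
/-!
Write `F` for the constrained objective and `P = ‖M ·‖²_Γ̂ ≥ 0` for the penalty, whose zero set is
the feasible set. Testing the minimality of `x k` against a feasible `z` gives
`F (x k) + λ_k P (x k) ≤ F z`. Hence `F (x k) ≤ F z` as soon as `λ_k ≥ 0`, which passes to
accumulation points by continuity; and near an accumulation point `x̄` with `P x̄ > 0` the left-hand
side would exceed `F x̄ - 1 + λ_k P x̄ / 2 → ∞` along the terms that visit it, contradicting
that bound.
-/

open Matrix Filter

/-- Squared weighted norm `‖x‖_A² = ⟨x, A⁻¹ x⟩` for an s.p.d. matrix `A`. -/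
noncomputable def wsq {ι : Type*} [Fintype ι] [DecidableEq ι]
    (A : Matrix ι ι ℝ) (x : ι → ℝ) : ℝ :=
  x ⬝ᵥ (A⁻¹ *ᵥ x)

open Topology

section WeightedNorm

variable {ι : Type*} [Fintype ι] [DecidableEq ι] {A : Matrix ι ι ℝ}

theorem Matrix.PosDef.wsq_nonneg (hA : A.PosDef) (v : ι → ℝ) : 0 ≤ wsq A v := by
  simpa [wsq] using hA.inv.posSemidef.dotProduct_mulVec_nonneg v

theorem Matrix.PosDef.wsq_eq_zero_iff (hA : A.PosDef) {v : ι → ℝ} : wsq A v = 0 ↔ v = 0 := by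
  refine ⟨fun h => ?_, fun h => by simp [wsq, h]⟩
  by_contra hv
  have hpos : 0 < wsq A v := by simpa [wsq] using hA.inv.dotProduct_mulVec_pos hv
  exact hpos.ne' h

@[fun_prop]
theorem continuous_wsq (A : Matrix ι ι ℝ) : Continuous (wsq A) :=
  continuous_id.dotProduct (continuous_const.matrix_mulVec continuous_id)

end WeightedNorm

section PenaltyMethod

variable {X : Type*} [TopologicalSpace X] {F P : X → ℝ} {lam : ℕ → ℝ} {x : ℕ → X} {xbar : X}

theorem penalty_mapClusterPt_le (hF : Continuous F) (hP : ∀ w, 0 ≤ P w)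
    (hlam : Tendsto lam atTop atTop)
    (hmin : ∀ k z, F (x k) + lam k * P (x k) ≤ F z + lam k * P z)
    (hacc : MapClusterPt xbar atTop x) {z : X} (hz : P z = 0) : F xbar ≤ F z := by
  refine (isClosed_le hF continuous_const).mem_of_mapClusterPt hacc ?_
  filter_upwards [hlam.eventually_ge_atTop 0] with k hk
  have hmin_z := hmin k z
  rw [hz, mul_zero, add_zero] at hmin_z
  nlinarith [mul_nonneg hk (hP (x k))]

theorem penalty_mapClusterPt_eq_zero (hF : Continuous F) (hP : Continuous P)
    (hP_nonneg : ∀ w, 0 ≤ P w) (hlam : Tendsto lam atTop atTop)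
    (hmin : ∀ k z, F (x k) + lam k * P (x k) ≤ F z + lam k * P z)
    (hacc : MapClusterPt xbar atTop x) (hfeas : ∃ z, P z = 0) : P xbar = 0 := by
  obtain ⟨z₀, hz₀⟩ := hfeas
  by_contra hne
  have hc : 0 < P xbar := (hP_nonneg xbar).lt_of_ne' hne
  have hnear : ∀ᶠ w in 𝓝 xbar, P xbar / 2 < P w ∧ F xbar - 1 < F w :=
    (continuousAt_const.eventually_lt hP.continuousAt (half_lt_self hc)).and
      (continuousAt_const.eventually_lt hF.continuousAt (sub_one_lt _))
  have hlarge : ∀ᶠ k in atTop, 0 ≤ lam k ∧ F z₀ - F xbar + 1 < lam k * (P xbar / 2) :=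
    (hlam.eventually_ge_atTop 0).and
      ((hlam.atTop_mul_const (half_pos hc)).eventually_gt_atTop _)
  obtain ⟨k, ⟨hPk, hFk⟩, hlam_nonneg, hlam_large⟩ :=
    ((hacc.frequently hnear).and_eventually hlarge).exists
  have hmin_z₀ := hmin k z₀
  rw [hz₀, mul_zero, add_zero] at hmin_z₀
  nlinarith [mul_le_mul_of_nonneg_left hPk.le hlam_nonneg]

end PenaltyMethod

theorem penalty_method_accumulation_point_general
    {nu np nw ny : ℕ}
    (O : (Fin np → ℝ) → (Fin ny → ℝ))
    (M : (Fin nu → ℝ) × (Fin np → ℝ) → (Fin nw → ℝ))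
    (hO : Continuous O) (hM : Continuous M)
    (R₁ : (Fin nu → ℝ) → ℝ) (R₂ : (Fin np → ℝ) → ℝ)
    (hR₁ : Continuous R₁) (hR₂ : Continuous R₂)
    (α₁ α₂ : ℝ)
    (Γobs : Matrix (Fin ny) (Fin ny) ℝ) (Γhat : Matrix (Fin nw) (Fin nw) ℝ)
    (hΓhat : Γhat.PosDef)
    (y : Fin ny → ℝ)
    (hfeas : ∃ z : (Fin nu → ℝ) × (Fin np → ℝ), M z = 0)
    (lam : ℕ → ℝ)
    (hlamtop : Tendsto lam atTop atTop)
    (x : ℕ → (Fin nu → ℝ) × (Fin np → ℝ))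
    (hmin : ∀ k, ∀ z : (Fin nu → ℝ) × (Fin np → ℝ),
      (1/2) * wsq Γobs (O (x k).2 - y) + (lam k / 2) * wsq Γhat (M (x k))
        + α₁ * R₁ (x k).1 + α₂ * R₂ (x k).2
      ≤ (1/2) * wsq Γobs (O z.2 - y) + (lam k / 2) * wsq Γhat (M z)
        + α₁ * R₁ z.1 + α₂ * R₂ z.2)
    (xbar : (Fin nu → ℝ) × (Fin np → ℝ))
    (hacc : MapClusterPt xbar atTop x) :
    M xbar = 0 ∧
      ∀ z : (Fin nu → ℝ) × (Fin np → ℝ), M z = 0 →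
        (1/2) * wsq Γobs (O xbar.2 - y) + α₁ * R₁ xbar.1 + α₂ * R₂ xbar.2
          ≤ (1/2) * wsq Γobs (O z.2 - y) + α₁ * R₁ z.1 + α₂ * R₂ z.2 := by
  set F : (Fin nu → ℝ) × (Fin np → ℝ) → ℝ :=
    fun z => (1/2) * wsq Γobs (O z.2 - y) + α₁ * R₁ z.1 + α₂ * R₂ z.2
  have hF : Continuous F := by simp only [F]; fun_prop
  have hP : Continuous (wsq Γhat ∘ M) := (continuous_wsq Γhat).comp hM
  have hP_zero {z} : (wsq Γhat ∘ M) z = 0 ↔ M z = 0 := hΓhat.wsq_eq_zero_iff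
  have hmin' : ∀ k z, F (x k) + lam k / 2 * (wsq Γhat ∘ M) (x k)
      ≤ F z + lam k / 2 * (wsq Γhat ∘ M) z := fun k z => by
    simp only [F, Function.comp_apply]; linarith [hmin k z]
  have hlam : Tendsto (fun k => lam k / 2) atTop atTop := hlamtop.atTop_div_const two_pos
  refine ⟨hP_zero.1 ?_, fun z hz => ?_⟩
  · exact penalty_mapClusterPt_eq_zero hF hP (fun _ => hΓhat.wsq_nonneg _) hlam hmin' hacc
      (hfeas.imp fun _ => hP_zero.2)
  · exact penalty_mapClusterPt_le hF (fun _ => hΓhat.wsq_nonneg _) hlam hmin' hacc (hP_zero.2 hz)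

/-- Penalty method convergence (Proposition 1): every accumulation point of the
sequence of global minimizers of the penalized problems with `λ_k → ∞` is a
global minimizer of the constrained problem. -/
theorem penalty_method_accumulation_point
    {nu np nw ny : ℕ}
    (O : (Fin np → ℝ) → (Fin ny → ℝ))
    (M : (Fin nu → ℝ) × (Fin np → ℝ) → (Fin nw → ℝ))
    (hO : Continuous O) (hM : Continuous M)
    (R₁ : (Fin nu → ℝ) → ℝ) (R₂ : (Fin np → ℝ) → ℝ)
    (hR₁ : Continuous R₁) (hR₂ : Continuous R₂)
    (α₁ α₂ : ℝ) (hα₁ : 0 < α₁) (hα₂ : 0 < α₂)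
    (Γobs : Matrix (Fin ny) (Fin ny) ℝ) (Γhat : Matrix (Fin nw) (Fin nw) ℝ)
    (hΓobs : Γobs.PosDef) (hΓhat : Γhat.PosDef)
    (y : Fin ny → ℝ)
    (hfeas : ∃ z : (Fin nu → ℝ) × (Fin np → ℝ), M z = 0)
    (lam : ℕ → ℝ) (hlampos : ∀ k, 0 < lam k) (hlammono : StrictMono lam)
    (hlamtop : Tendsto lam atTop atTop)
    (x : ℕ → (Fin nu → ℝ) × (Fin np → ℝ))
    (hmin : ∀ k, ∀ z : (Fin nu → ℝ) × (Fin np → ℝ),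
      (1/2) * wsq Γobs (O (x k).2 - y) + (lam k / 2) * wsq Γhat (M (x k))
        + α₁ * R₁ (x k).1 + α₂ * R₂ (x k).2
      ≤ (1/2) * wsq Γobs (O z.2 - y) + (lam k / 2) * wsq Γhat (M z)
        + α₁ * R₁ z.1 + α₂ * R₂ z.2)
    (xbar : (Fin nu → ℝ) × (Fin np → ℝ))
    (hacc : MapClusterPt xbar atTop x) :
    M xbar = 0 ∧
      ∀ z : (Fin nu → ℝ) × (Fin np → ℝ), M z = 0 →
        (1/2) * wsq Γobs (O xbar.2 - y) + α₁ * R₁ xbar.1 + α₂ * R₂ xbar.2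
          ≤ (1/2) * wsq Γobs (O z.2 - y) + α₁ * R₁ z.1 + α₂ * R₂ z.2 :=
  penalty_method_accumulation_point_general O M hO hM R₁ R₂ hR₁ hR₂ α₁ α₂ Γobs Γhat hΓhat y hfeas
    lam hlamtop x hmin xbar hacc
end

section
/- Let A ∈ ℝ^{m×n}, let Γ ∈ ℝ^{m×m} and C₀ ∈ ℝ^{n×n} be symmetric positive definite, let y ∈ ℝᵐ and v₀ ∈ ℝⁿ. Define C(t) := (C₀⁻¹ + t AᵀΓ⁻¹A)⁻¹ and m(t) := C(t)(t AᵀΓ⁻¹y + C₀⁻¹v₀) for t ≥ 0. Then m(0) = v₀ and m satisfies the differential equation dm(t)/dt = −C(t) AᵀΓ⁻¹ (A m(t) − y) for all t ≥ 0. -/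
/-!
For `t ≥ 0` the matrix `B t = C₀⁻¹ + t • S`, `S = AᵀΓ⁻¹A`, is positive definite (a positive
definite plus a positive semidefinite matrix), so `C t = (B t)⁻¹` is differentiable with
`C' = -C S C`. Since `m = C w` with `w t = t • AᵀΓ⁻¹y + C₀⁻¹v₀`, the product rule gives
`m' = -C S m + C AᵀΓ⁻¹y = -C AᵀΓ⁻¹(A m - y)`.
-/

open Matrix

attribute [local instance] Matrix.linftyOpNormedAddCommGroup Matrix.linftyOpNormedSpace
  Matrix.linftyOpNormedRing Matrix.linftyOpNormedAlgebra

theorem HasDerivAt.ringInverse {𝕜 R : Type*} [NontriviallyNormedField 𝕜] [NormedRing R]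
    [HasSummableGeomSeries R] [NormedAlgebra 𝕜 R] {f : 𝕜 → R} {f' : R} {t : 𝕜}
    (hf : HasDerivAt f f' t) (ht : IsUnit (f t)) :
    HasDerivAt (fun s => Ring.inverse (f s))
      (-(Ring.inverse (f t) * f' * Ring.inverse (f t))) t := by
  obtain ⟨u, hu⟩ := ht
  have hinv := hasFDerivAt_ringInverse (𝕜 := 𝕜) u
  rw [hu] at hinv
  rw [← hu, Ring.inverse_unit]
  exact (hinv.comp_hasDerivAt t hf).congr_deriv (by simp [mul_assoc])

section

variable {𝕜 ι κ : Type*} [NontriviallyNormedField 𝕜] [CompleteSpace 𝕜] [Fintype ι] [Fintype κ]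
  {t : 𝕜}

theorem HasDerivAt.matrix_inv [DecidableEq ι] {M : 𝕜 → Matrix ι ι 𝕜} {M' : Matrix ι ι 𝕜}
    (hM : HasDerivAt M M' t) (ht : IsUnit (M t).det) :
    HasDerivAt (fun s => (M s)⁻¹) (-((M t)⁻¹ * M' * (M t)⁻¹)) t := by
  -- the `linftyOp` uniformity is the product one only up to unfolding, which instance search
  -- does not do
  have : HasSummableGeomSeries (Matrix ι ι 𝕜) :=
    @instHasSummableGeomSeriesOfCompleteSpace _ _ (FiniteDimensional.complete 𝕜 _)
  simp only [nonsing_inv_eq_ringInverse]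
  exact hM.ringInverse ((isUnit_iff_isUnit_det _).mpr ht)

theorem HasDerivAt.matrix_mulVec {M : 𝕜 → Matrix ι κ 𝕜} {M' : Matrix ι κ 𝕜} {v : 𝕜 → κ → 𝕜}
    {v' : κ → 𝕜} (hM : HasDerivAt M M' t) (hv : HasDerivAt v v' t) :
    HasDerivAt (fun s => M s *ᵥ v s) (M' *ᵥ v t + M t *ᵥ v') t := by
  have h := (mulVecBilin 𝕜 𝕜).toContinuousBilinearMap.hasDerivAt_of_bilinear
    (fun _ => hM) (fun _ => hv)
  simp only [LinearMap.toContinuousBilinearMap_apply, mulVecBilin_apply, add_comm] at h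
  exact h

end

/-- In the mean-field limit of ensemble Kalman inversion for a linear forward
operator, the mean `m(t) = C(t)(t AᵀΓ⁻¹y + C₀⁻¹v₀)` with
`C(t) = (C₀⁻¹ + t AᵀΓ⁻¹A)⁻¹` satisfies `m(0) = v₀` and the mean-field ODE
`dm/dt = −C(t) AᵀΓ⁻¹(A m(t) − y)` for all `t ≥ 0`. -/
theorem eki_mean_ode
    {m n : ℕ} (A : Matrix (Fin m) (Fin n) ℝ)
    (Γ : Matrix (Fin m) (Fin m) ℝ) (C₀ : Matrix (Fin n) (Fin n) ℝ)
    (hΓ : Γ.PosDef) (hC₀ : C₀.PosDef)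
    (y : Fin m → ℝ) (v₀ : Fin n → ℝ)
    (C : ℝ → Matrix (Fin n) (Fin n) ℝ)
    (hC : ∀ t : ℝ, C t = (C₀⁻¹ + t • (Aᵀ * Γ⁻¹ * A))⁻¹)
    (mfun : ℝ → Fin n → ℝ)
    (hm : ∀ t : ℝ, mfun t = C t *ᵥ (t • ((Aᵀ * Γ⁻¹) *ᵥ y) + C₀⁻¹ *ᵥ v₀)) :
    mfun 0 = v₀ ∧
    ∀ t : ℝ, 0 ≤ t →
      HasDerivAt mfun (-(C t *ᵥ ((Aᵀ * Γ⁻¹) *ᵥ (A *ᵥ mfun t - y)))) t := by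
  set S := Aᵀ * Γ⁻¹ * A
  set b := (Aᵀ * Γ⁻¹) *ᵥ y
  have hS : S.PosSemidef := by
    simpa using hΓ.inv.posSemidef.conjTranspose_mul_mul_same A
  have hC₀det : IsUnit C₀.det := (isUnit_iff_isUnit_det C₀).mp hC₀.isUnit
  refine ⟨?_, fun t ht => ?_⟩
  · rw [hm, hC, zero_smul, zero_smul, add_zero, zero_add, nonsing_inv_nonsing_inv _ hC₀det,
      mulVec_mulVec, mul_nonsing_inv _ hC₀det, one_mulVec]
  have hB : IsUnit (C₀⁻¹ + t • S).det :=
    (isUnit_iff_isUnit_det _).mp (hC₀.inv.add_posSemidef (hS.smul ht)).isUnit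
  have hCderiv : HasDerivAt C (-(C t * S * C t)) t := by
    have h := (((hasDerivAt_id' t).smul_const S).const_add C₀⁻¹).matrix_inv hB
    simpa only [one_smul, ← hC] using h
  have hw : HasDerivAt (fun s : ℝ => s • b + C₀⁻¹ *ᵥ v₀) b t := by
    simpa using ((hasDerivAt_id' t).smul_const b).add_const (C₀⁻¹ *ᵥ v₀)
  rw [funext hm]
  convert hCderiv.matrix_mulVec hw using 1
  simp only [S, b, mulVec_sub, neg_mulVec, ← mulVec_mulVec]
  abel
end

section
/- Let A ∈ ℝ^{m×n}, let Γ ∈ ℝ^{m×m} and C₀ ∈ ℝ^{n×n} be symmetric positive definite, let y ∈ ℝᵐ and v₀ ∈ ℝⁿ, and assume AᵀΓ⁻¹A is positive definite. Then the mean m(t) := (C₀⁻¹ + t AᵀΓ⁻¹A)⁻¹(t AᵀΓ⁻¹y + C₀⁻¹v₀) converges as t → ∞ to v∞ := (AᵀΓ⁻¹A)⁻¹AᵀΓ⁻¹y, and v∞ is the unique global minimizer of the data misfit v ↦ ½‖Av − y‖²_Γ over ℝⁿ. -/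
open Matrix Filter

/-!
Dividing numerator and denominator by `t`, the mean is `g (1/t)` with
`g s = (s C₀⁻¹ + B)⁻¹ (b + s C₀⁻¹ v₀)`, `B = AᵀΓ⁻¹A`, `b = AᵀΓ⁻¹y`; since `B` is invertible,
`g` is continuous at `0` and `g 0 = B⁻¹b = v∞`. The limit `v∞` solves the normal equations
`AᵀΓ⁻¹(Av∞ - y) = 0`, so the cross term vanishes in
`‖Av - y‖²_Γ = ‖Av∞ - y‖²_Γ + ⟨v - v∞, B(v - v∞)⟩`, and `B ≻ 0` makes `v∞` the strict minimizer.
-/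

open Topology

theorem Matrix.inv_smul_of_ne_zero {ι K : Type*} [Fintype ι] [DecidableEq ι] [Field K]
    (A : Matrix ι ι K) {k : K} (hk : k ≠ 0) : (k • A)⁻¹ = k⁻¹ • A⁻¹ := by
  by_cases hA : IsUnit A.det
  · exact inv_smul' A (Units.mk0 k hk) hA
  · -- both inverses are the junk value `0`
    have hkA : ¬IsUnit (k • A).det := by
      simpa [det_smul, isUnit_iff_ne_zero, hk] using hA
    rw [nonsing_inv_apply_not_isUnit _ hA, nonsing_inv_apply_not_isUnit _ hkA, smul_zero]

section

variable {ι κ : Type*} [Fintype ι] [Fintype κ] [DecidableEq κ]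

theorem tendsto_inv_add_smul_mulVec_add_atTop [DecidableEq ι] {B : Matrix ι ι ℝ}
    (hB : IsUnit B.det) (C : Matrix ι ι ℝ) (b c : ι → ℝ) :
    Tendsto (fun t : ℝ => (C + t • B)⁻¹ *ᵥ (t • b + c)) atTop (𝓝 (B⁻¹ *ᵥ b)) := by
  set g : ℝ → ι → ℝ := fun s => (s • C + B)⁻¹ *ᵥ (b + s • c)
  have hg : ContinuousAt g 0 := by
    have hinv : ContinuousAt Inv.inv B :=
      continuousAt_matrix_inv B (by
        simpa [Ring.inverse_eq_inv'] using continuousAt_inv₀ (isUnit_iff_ne_zero.1 hB))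
    have hB' : ContinuousAt (fun s : ℝ => s • C + B) 0 := by fun_prop
    exact (continuous_fst.matrix_mulVec continuous_snd).continuousAt.comp₂
      (hinv.comp_of_eq hB' (by simp)) (by fun_prop)
  have hg0 : g 0 = B⁻¹ *ᵥ b := by simp [g]
  have hlim : Tendsto (fun t : ℝ => g t⁻¹) atTop (𝓝 (B⁻¹ *ᵥ b)) :=
    hg0 ▸ hg.tendsto.comp tendsto_inv_atTop_zero
  refine hlim.congr' ?_
  filter_upwards [eventually_ne_atTop 0] with t ht
  have hsplit : C + t • B = t • (t⁻¹ • C + B) := by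
    rw [smul_add, smul_smul, mul_inv_cancel₀ ht, one_smul]
  simp only [g, hsplit, inv_smul_of_ne_zero _ ht, smul_mulVec, mulVec_add, mulVec_smul]
  rw [smul_smul, mul_inv_cancel₀ ht, one_smul]

theorem wsq_add {Γ : Matrix κ κ ℝ} (hΓ : Γ.IsHermitian) (x r : κ → ℝ) :
    wsq Γ (x + r) = wsq Γ x + 2 * (x ⬝ᵥ (Γ⁻¹ *ᵥ r)) + wsq Γ r := by
  have hsymm : r ⬝ᵥ (Γ⁻¹ *ᵥ x) = x ⬝ᵥ (Γ⁻¹ *ᵥ r) := by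
    rw [dotProduct_mulVec, ← mulVec_transpose, ← conjTranspose_eq_transpose_of_trivial,
      hΓ.inv.eq, dotProduct_comm]
  simp only [wsq, mulVec_add, dotProduct_add, add_dotProduct, hsymm]
  ring

theorem wsq_mulVec (Γ : Matrix κ κ ℝ) (A : Matrix κ ι ℝ) (d : ι → ℝ) :
    wsq Γ (A *ᵥ d) = d ⬝ᵥ ((Aᵀ * Γ⁻¹ * A) *ᵥ d) := by
  rw [wsq, ← mulVec_mulVec, ← mulVec_mulVec, ← vecMul_transpose, ← dotProduct_mulVec]

theorem wsq_mulVec_sub_eq_of_normal_eq {Γ : Matrix κ κ ℝ} (hΓ : Γ.IsHermitian)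
    {A : Matrix κ ι ℝ} {y : κ → ℝ} {u : ι → ℝ} (hu : (Aᵀ * Γ⁻¹) *ᵥ (A *ᵥ u - y) = 0)
    (v : ι → ℝ) :
    wsq Γ (A *ᵥ v - y) = wsq Γ (A *ᵥ u - y) + (v - u) ⬝ᵥ ((Aᵀ * Γ⁻¹ * A) *ᵥ (v - u)) := by
  have hcross : (A *ᵥ (v - u)) ⬝ᵥ (Γ⁻¹ *ᵥ (A *ᵥ u - y)) = 0 := by
    rw [← mulVec_mulVec] at hu
    rw [← vecMul_transpose, ← dotProduct_mulVec, hu, dotProduct_zero]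
  have hsplit : A *ᵥ v - y = A *ᵥ (v - u) + (A *ᵥ u - y) := by
    rw [mulVec_sub]; abel
  rw [hsplit, wsq_add hΓ, wsq_mulVec, hcross]
  ring

theorem wsq_mulVec_sub_lt_of_normal_eq {Γ : Matrix κ κ ℝ} (hΓ : Γ.IsHermitian)
    {A : Matrix κ ι ℝ} (hA : (Aᵀ * Γ⁻¹ * A).PosDef) {y : κ → ℝ} {u v : ι → ℝ}
    (hu : (Aᵀ * Γ⁻¹) *ᵥ (A *ᵥ u - y) = 0) (hv : v ≠ u) :
    wsq Γ (A *ᵥ u - y) < wsq Γ (A *ᵥ v - y) := by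
  have hpos := hA.dotProduct_mulVec_pos (sub_ne_zero.2 hv)
  rw [star_trivial] at hpos
  rw [wsq_mulVec_sub_eq_of_normal_eq hΓ hu v]
  linarith

theorem inv_mulVec_solves_normal_eq [DecidableEq ι] {Γ : Matrix κ κ ℝ} {A : Matrix κ ι ℝ}
    (hB : IsUnit (Aᵀ * Γ⁻¹ * A).det) (y : κ → ℝ) :
    (Aᵀ * Γ⁻¹) *ᵥ (A *ᵥ ((Aᵀ * Γ⁻¹ * A)⁻¹ *ᵥ ((Aᵀ * Γ⁻¹) *ᵥ y)) - y) = 0 := by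
  rw [mulVec_sub, mulVec_mulVec, mulVec_mulVec, mul_nonsing_inv _ hB, one_mulVec, sub_self]

end

theorem eki_mean_tendsto_least_squares_general
    {m n : ℕ} (A : Matrix (Fin m) (Fin n) ℝ)
    (Γ : Matrix (Fin m) (Fin m) ℝ) (C₀ : Matrix (Fin n) (Fin n) ℝ)
    (hΓ : Γ.PosDef)
    (y : Fin m → ℝ) (v₀ : Fin n → ℝ)
    (hA : (Aᵀ * Γ⁻¹ * A).PosDef)
    (mfun : ℝ → Fin n → ℝ)
    (hm : ∀ t : ℝ, mfun t =
      (C₀⁻¹ + t • (Aᵀ * Γ⁻¹ * A))⁻¹ *ᵥ (t • ((Aᵀ * Γ⁻¹) *ᵥ y) + C₀⁻¹ *ᵥ v₀))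
    (vinf : Fin n → ℝ)
    (hvinf : vinf = (Aᵀ * Γ⁻¹ * A)⁻¹ *ᵥ ((Aᵀ * Γ⁻¹) *ᵥ y)) :
    Tendsto mfun atTop (nhds vinf) ∧
    (∀ v : Fin n → ℝ, (1/2) * wsq Γ (A *ᵥ vinf - y) ≤ (1/2) * wsq Γ (A *ᵥ v - y)) ∧
    (∀ v : Fin n → ℝ,
      (∀ w : Fin n → ℝ, (1/2) * wsq Γ (A *ᵥ v - y) ≤ (1/2) * wsq Γ (A *ᵥ w - y)) →
        v = vinf) := by
  have hB : IsUnit (Aᵀ * Γ⁻¹ * A).det := isUnit_iff_ne_zero.2 hA.det_pos.ne'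
  have hnormal : (Aᵀ * Γ⁻¹) *ᵥ (A *ᵥ vinf - y) = 0 := hvinf ▸ inv_mulVec_solves_normal_eq hB y
  have hlt : ∀ v, v ≠ vinf → wsq Γ (A *ᵥ vinf - y) < wsq Γ (A *ᵥ v - y) :=
    fun v hv => wsq_mulVec_sub_lt_of_normal_eq hΓ.isHermitian hA hnormal hv
  refine ⟨?_, fun v => ?_, fun v hmin => ?_⟩
  · rw [funext hm, hvinf]
    exact tendsto_inv_add_smul_mulVec_add_atTop hB _ _ _
  · rcases eq_or_ne v vinf with rfl | hv
    · exact le_rfl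
    · linarith [hlt v hv]
  · by_contra hv
    linarith [hlt v hv, hmin vinf]

/-- The mean `m(t) = (C₀⁻¹ + t AᵀΓ⁻¹A)⁻¹(t AᵀΓ⁻¹y + C₀⁻¹v₀)` of the mean-field
ensemble Kalman inversion converges, as `t → ∞`, to
`v∞ = (AᵀΓ⁻¹A)⁻¹AᵀΓ⁻¹y`, the unique global minimizer of the data misfit
`v ↦ ½‖Av − y‖²_Γ`. -/
theorem eki_mean_tendsto_least_squares
    {m n : ℕ} (A : Matrix (Fin m) (Fin n) ℝ)
    (Γ : Matrix (Fin m) (Fin m) ℝ) (C₀ : Matrix (Fin n) (Fin n) ℝ)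
    (hΓ : Γ.PosDef) (hC₀ : C₀.PosDef)
    (y : Fin m → ℝ) (v₀ : Fin n → ℝ)
    (hA : (Aᵀ * Γ⁻¹ * A).PosDef)
    (mfun : ℝ → Fin n → ℝ)
    (hm : ∀ t : ℝ, mfun t =
      (C₀⁻¹ + t • (Aᵀ * Γ⁻¹ * A))⁻¹ *ᵥ (t • ((Aᵀ * Γ⁻¹) *ᵥ y) + C₀⁻¹ *ᵥ v₀))
    (vinf : Fin n → ℝ)
    (hvinf : vinf = (Aᵀ * Γ⁻¹ * A)⁻¹ *ᵥ ((Aᵀ * Γ⁻¹) *ᵥ y)) :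
    Tendsto mfun atTop (nhds vinf) ∧
    (∀ v : Fin n → ℝ, (1/2) * wsq Γ (A *ᵥ vinf - y) ≤ (1/2) * wsq Γ (A *ᵥ v - y)) ∧
    (∀ v : Fin n → ℝ,
      (∀ w : Fin n → ℝ, (1/2) * wsq Γ (A *ᵥ v - y) ≤ (1/2) * wsq Γ (A *ᵥ w - y)) →
        v = vinf) :=
  eki_mean_tendsto_least_squares_general A Γ C₀ hΓ y v₀ hA mfun hm vinf hvinf
end
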